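/- arXiv:1506.01161 — 2 statements merged into one kernel-verified Lean document; each statement's English description precedes it below -/
import Mathlib

section
/- In the ring R = ℤ[A, A^{-1}] of Laurent polynomials over the integers, setting δ = −A² − A^{-2}, the ideal I generated by the three elements 4, δ³ − 1, and δ⁴ + A⁴ + A^{-4} is equal to the ideal generated by the two elements 4 and A² + 1 + A^{-2}. -/
open LaurentPolynomial

/-- `δ = -A² - A⁻²` in the ring `R = ℤ[A, A⁻¹]` of Laurent polynomials over `ℤ`
(where `A = T 1`, so `Aⁿ = T n`). -/
noncomputable def δ : LaurentPolynomial ℤ := -T 2 - T (-2)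

/-- In `R = ℤ[A, A⁻¹]`, the ideal generated by `4`, `δ³ - 1` and `δ⁴ + A⁴ + A⁻⁴`
equals the ideal generated by `4` and `A² + 1 + A⁻²`. -/
theorem groebner_basis_of_ideal :
    Ideal.span ({4, δ ^ 3 - 1, δ ^ 4 + T 4 + T (-4)} : Set (LaurentPolynomial ℤ)) =
      Ideal.span ({4, T 2 + 1 + T (-2)} : Set (LaurentPolynomial ℤ)) := by
  have hxy : (T 2 * T (-2) : LaurentPolynomial ℤ) = 1 := by
    rw [← T_add]; norm_num
  have hx2 : (T 4 : LaurentPolynomial ℤ) = T 2 * T 2 := by rw [← T_add]; norm_num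
  have hy2 : (T (-4) : LaurentPolynomial ℤ) = T (-2) * T (-2) := by rw [← T_add]; norm_num
  set x : LaurentPolynomial ℤ := T 2 with hx
  set y : LaurentPolynomial ℤ := T (-2) with hy
  set u : LaurentPolynomial ℤ := x + 1 + y with hu
  have hδ : δ = -x - y := rfl
  have h4l : (4 : LaurentPolynomial ℤ) ∈
      Ideal.span ({4, u} : Set (LaurentPolynomial ℤ)) :=
    Ideal.subset_span (by simp)
  have hul : u ∈ Ideal.span ({4, u} : Set (LaurentPolynomial ℤ)) :=
    Ideal.subset_span (by simp)
  have g1 : δ ^ 3 - 1 ∈ Ideal.span ({4, u} : Set (LaurentPolynomial ℤ)) := by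
    have : δ ^ 3 - 1 = u * (-(u ^ 2 - 3 * u + 3)) := by
      rw [hδ, hu]; ring
    rw [this]
    exact Ideal.mul_mem_right _ _ hul
  have g2 : δ ^ 4 + T 4 + T (-4) ∈
      Ideal.span ({4, u} : Set (LaurentPolynomial ℤ)) := by
    have : δ ^ 4 + T 4 + T (-4) = u * (u ^ 3 - 4 * u ^ 2 + 7 * u - 6) := by
      rw [hδ, hu, hx2, hy2]
      linear_combination (-2 : LaurentPolynomial ℤ) * hxy
    rw [this]
    exact Ideal.mul_mem_right _ _ hul
  have h4r : (4 : LaurentPolynomial ℤ) ∈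
      Ideal.span ({4, δ ^ 3 - 1, δ ^ 4 + T 4 + T (-4)} : Set (LaurentPolynomial ℤ)) :=
    Ideal.subset_span (by simp)
  have hur : u ∈
      Ideal.span ({4, δ ^ 3 - 1, δ ^ 4 + T 4 + T (-4)} : Set (LaurentPolynomial ℤ)) := by
    have key : u = (-2 * u) * 4 + (-3 * (u ^ 2 - u + 1)) * (δ ^ 3 - 1)
        + (-3 * u) * (δ ^ 4 + T 4 + T (-4)) := by
      rw [hδ, hu, hx2, hy2]
      linear_combination (-6 * (x + 1 + y) : LaurentPolynomial ℤ) * hxy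
    rw [key]
    refine Ideal.add_mem _ (Ideal.add_mem _ ?_ ?_) ?_ <;>
      exact Ideal.mul_mem_left _ _ (Ideal.subset_span (by simp))
  apply le_antisymm <;> rw [Ideal.span_le] <;> intro z hz
  · rcases hz with rfl | rfl | rfl
    exacts [h4l, g1, g2]
  · rcases hz with rfl | rfl
    exacts [h4r, hur]
end

section
/- In the ring R = ℤ[A, A^{-1}] of Laurent polynomials over the integers, with I the ideal generated by 4, δ³ − 1, and δ⁴ + A⁴ + A^{-4} where δ = −A² − A^{-2}, one has the congruence (−A³)⁴ ≡ −A⁴ − A^{-4} (mod I); that is, the element (−A³)⁴ − (−A⁴ − A^{-4}) = A¹² + A⁴ + A^{-4} lies in I. -/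
open LaurentPolynomial

/-- In `R = ℤ[A, A⁻¹]`, with `I` the ideal generated by `4`, `δ³ - 1` and
`δ⁴ + A⁴ + A⁻⁴`, one has `(-A³)⁴ ≡ -A⁴ - A⁻⁴ (mod I)`, i.e.
`(-A³)⁴ - (-A⁴ - A⁻⁴)` lies in `I`. -/
theorem unknot_congruence :
    (-T 3 : LaurentPolynomial ℤ) ^ 4 - (-T 4 - T (-4)) ∈
      Ideal.span ({4, δ ^ 3 - 1, δ ^ 4 + T 4 + T (-4)} : Set (LaurentPolynomial ℤ)) := by
  set a : LaurentPolynomial ℤ := T 1 with ha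
  set b : LaurentPolynomial ℤ := T (-1) with hb
  have hab : a * b = 1 := by rw [ha, hb, ← T_add]; norm_num
  have h2 : (T 2 : LaurentPolynomial ℤ) = a ^ 2 := by rw [ha, T_pow]; norm_num
  have h3 : (T 3 : LaurentPolynomial ℤ) = a ^ 3 := by rw [ha, T_pow]; norm_num
  have h4 : (T 4 : LaurentPolynomial ℤ) = a ^ 4 := by rw [ha, T_pow]; norm_num
  have hm2 : (T (-2) : LaurentPolynomial ℤ) = b ^ 2 := by rw [hb, T_pow]; norm_num
  have hm4 : (T (-4) : LaurentPolynomial ℤ) = b ^ 4 := by rw [hb, T_pow]; norm_num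
  have hδ : δ = -a ^ 2 - b ^ 2 := by rw [δ, h2, hm2]
  set g1 : LaurentPolynomial ℤ := δ ^ 3 - 1 with hg1
  set g2 : LaurentPolynomial ℤ := δ ^ 4 + T 4 + T (-4) with hg2
  have m4 : (4 : LaurentPolynomial ℤ) ∈
      Ideal.span ({4, g1, g2} : Set (LaurentPolynomial ℤ)) :=
    Ideal.subset_span (by simp)
  have mg1 : g1 ∈ Ideal.span ({4, g1, g2} : Set (LaurentPolynomial ℤ)) :=
    Ideal.subset_span (by simp)
  have mg2 : g2 ∈ Ideal.span ({4, g1, g2} : Set (LaurentPolynomial ℤ)) :=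
    Ideal.subset_span (by simp)
  set c : LaurentPolynomial ℤ := δ + 1 - a ^ 2 * (a ^ 2 - 1) * (a ^ 6 + 1) with hc
  have key : (-T 3 : LaurentPolynomial ℤ) ^ 4 - (-T 4 - T (-4)) =
      ((δ - 1) * c) * 4 + ((-1 - δ ^ 2 + δ) * c) * g1 + ((δ - 1) * c) * g2 := by
    rw [h3, h4, hm4, hg1, hg2, h4, hm4, hc, hδ]
    linear_combination ((-3 : LaurentPolynomial ℤ) * (a * b) - 3 * a ^ 9 * b
      - 3 * a ^ 3 * b + 3 * a ^ 7 * b - 2 * a ^ 9 * b ^ 3 + 2 * a ^ 13 * b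
      + 2 * a ^ 5 * b ^ 3 + 2 * a ^ 5 * b + 2 * a ^ 11 * b ^ 3 + 2 * a ^ 3 * b ^ 3
      + 2 * a * b ^ 5 - 3 - 3 * a ^ 8 - 3 * a ^ 2 + 3 * a ^ 6 - 2 * a ^ 8 * b ^ 2
      + 2 * a ^ 12 + 2 * a ^ 4 * b ^ 2 + 2 * a ^ 4 + 2 * a ^ 10 * b ^ 2
      + 2 * a ^ 2 * b ^ 2 + 2 * b ^ 4) * hab
  rw [key]
  exact add_mem (add_mem (Ideal.mul_mem_left _ _ m4) (Ideal.mul_mem_left _ _ mg1))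
    (Ideal.mul_mem_left _ _ mg2)
end
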